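/- Let H be a numerical semigroup of minimal multiplicity. Then H is nearly Gorenstein if and only if H is almost symmetric. More precisely, writing H = ⟨n₁,…,n_e⟩ with n₁ < ⋯ < n_e and n₁ = e, H is nearly Gorenstein if and only if n₁ + n_e = n_i + n_{e−i+1} for i = 2, …, e. -/

import Mathlib

/-- The set of integers belonging to the numerical semigroup `H ⊆ ℕ`. -/
def HZ (H : AddSubmonoid ℕ) : Set ℤ := {z : ℤ | ∃ h ∈ H, (h : ℤ) = z}

/-- The set of pseudo-Frobenius numbers of `H`: the `f ∉ H` with `f + h ∈ H`
for every nonzero `h ∈ H`. -/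
def PF (H : AddSubmonoid ℕ) : Set ℕ := {f | f ∉ H ∧ ∀ h ∈ H, h ≠ 0 → f + h ∈ H}

/-- The canonical relative ideal `Ω_H = {x ∈ ℤ : F − x ∉ H}`, where `F` is the
Frobenius number of `H`. -/
def Omega (H : AddSubmonoid ℕ) (F : ℕ) : Set ℤ := {x : ℤ | (F : ℤ) - x ∉ HZ H}

/-- The anti-canonical relative ideal `Ω_H⁻¹ = {z ∈ ℤ : z + Ω_H ⊆ H}`. -/
def OmegaInv (H : AddSubmonoid ℕ) (F : ℕ) : Set ℤ :=
  {z : ℤ | ∀ w ∈ Omega H F, z + w ∈ HZ H}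

open Pointwise

/-!
Let `e = n 0 < n 1 < ⋯ < n (e - 1)` be the minimal generators. Minimality makes the `n i` pairwise
incongruent modulo `e`, so they represent all residues (`n 0 = e` standing for the class of `0`),
and the sum of two generators lies strictly above the generator of its class. Hence every nonzero
element of `H` is some `n i + t e`, `PF(H) = {n i - e | i ≠ 0}` and `F = n (e - 1) - e`.

Both properties are then equivalent to `n i + n (e - 1 - i) = e + n (e - 1)` for all `i`. For almost
symmetry this is read off the description of `PF(H)`. Near Gorensteinness amounts to `e ∈ Ω⁻¹`,
because every nonzero `x ∈ H` has `x - e ∈ H ∪ PF(H)`; and `e + (n (e - 1) - n i) ∈ H` while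
`n (e - 1) - n i ∉ H` forces `e + n (e - 1) - n i` to be a generator. So in both cases every `i`
has a partner `j` with `n i + n j = e + n (e - 1)`; as `i ↦ j` is strictly decreasing,
`j = e - 1 - i`.
-/

theorem Fin.add_rev_eq_of_forall_exists_add_eq {α : Type*} [AddCommMonoid α] [LinearOrder α]
    [IsOrderedCancelAddMonoid α] {m : ℕ} {f : Fin m → α} (hf : StrictMono f) {c : α}
    (h : ∀ i, ∃ j, f i + f j = c) (i : Fin m) : f i + f i.rev = c := by
  choose σ hσ using h
  have hσ_anti : StrictAnti σ := fun i j hij => hf.lt_iff_lt.mp <| lt_of_not_ge fun hle =>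
    (add_lt_add_of_lt_of_le (hf hij) hle).ne ((hσ i).trans (hσ j).symm)
  have hσi : σ i = i.rev := by simpa using (hσ_anti.comp Fin.rev_strictAnti).apply_eq (x := i.rev)
  rw [← hσi]
  exact hσ i

def IsFrobeniusNumber (H : AddSubmonoid ℕ) (F : ℕ) : Prop := IsGreatest {x : ℕ | x ∉ H} F

def IsNearlyGorenstein (H : AddSubmonoid ℕ) (F : ℕ) : Prop :=
  ∀ x ∈ HZ H, x ≠ 0 → x ∈ Omega H F + OmegaInv H F

def IsAlmostSymmetric (H : AddSubmonoid ℕ) (F : ℕ) : Prop := ∀ f ∈ PF H, f ≠ F → F - f ∈ PF H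

section

variable {H : AddSubmonoid ℕ} {F : ℕ}

@[simp]
lemma natCast_mem_HZ {x : ℕ} : (x : ℤ) ∈ HZ H ↔ x ∈ H := by
  refine ⟨fun ⟨h, hh, hx⟩ => ?_, fun hx => ⟨x, hx, rfl⟩⟩
  obtain rfl : h = x := by omega
  exact hh

lemma add_natCast_mem_OmegaInv {z : ℤ} {h : ℕ} (hz : z ∈ OmegaInv H F) (hh : h ∈ H) :
    z + h ∈ OmegaInv H F := by
  intro w hw
  obtain ⟨a, ha, hae⟩ := hz w hw
  exact ⟨a + h, add_mem ha hh, by push_cast; omega⟩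

namespace IsFrobeniusNumber

variable (hF : IsFrobeniusNumber H F)
include hF

lemma mem_of_lt {x : ℕ} (hx : F < x) : x ∈ H := by
  by_contra h
  exact (hF.2 h).not_gt hx

lemma mem_PF : F ∈ PF H := ⟨hF.1, fun _ _ h0 => hF.mem_of_lt (by omega)⟩

lemma zero_mem_Omega : (0 : ℤ) ∈ Omega H F := by
  simpa [Omega] using hF.1

lemma nonneg_of_mem_Omega {w : ℤ} (hw : w ∈ Omega H F) : 0 ≤ w := by
  by_contra! hw0
  exact hw ⟨((F : ℤ) - w).toNat, hF.mem_of_lt (by omega), by omega⟩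

lemma mem_HZ_of_mem_OmegaInv {z : ℤ} (hz : z ∈ OmegaInv H F) : z ∈ HZ H := by
  simpa using hz 0 hF.zero_mem_Omega

end IsFrobeniusNumber

end

structure IsMinMultGenerators (H : AddSubmonoid ℕ) {e : ℕ} [NeZero e] (n : Fin e → ℕ) : Prop where
  strictMono : StrictMono n
  closure_range_eq : AddSubmonoid.closure (Set.range n) = H
  notMem_closure_diff : ∀ i, n i ∉ AddSubmonoid.closure (Set.range n \ {n i})
  apply_zero : n 0 = e

namespace IsMinMultGenerators

variable {H : AddSubmonoid ℕ} {e : ℕ} [NeZero e] {n : Fin e → ℕ} (hH : IsMinMultGenerators H n)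
include hH

lemma mem (i : Fin e) : n i ∈ H :=
  hH.closure_range_eq ▸ AddSubmonoid.subset_closure ⟨i, rfl⟩

lemma e_mem : e ∈ H :=
  hH.apply_zero ▸ hH.mem 0

lemma mul_mem (t : ℕ) : e * t ∈ H := by
  rw [mul_comm, ← smul_eq_mul]
  exact nsmul_mem hH.e_mem t

lemma add_mul_mem (i : Fin e) (t : ℕ) : n i + e * t ∈ H :=
  add_mem (hH.mem i) (hH.mul_mem t)

lemma le_apply (i : Fin e) : e ≤ n i :=
  hH.apply_zero ▸ hH.strictMono.monotone (Fin.zero_le i)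

lemma lt_apply {i : Fin e} (hi : i ≠ 0) : e < n i :=
  hH.apply_zero ▸ hH.strictMono (Fin.pos_iff_ne_zero.mpr hi)

lemma ne_of_mem_closure_image_Iio {k : Fin e} {x : ℕ}
    (hx : x ∈ AddSubmonoid.closure (n '' Set.Iio k)) : x ≠ n k := by
  rintro rfl
  refine hH.notMem_closure_diff k (AddSubmonoid.closure_mono ?_ hx)
  rintro _ ⟨i, hi, rfl⟩
  exact ⟨⟨i, rfl⟩, (hH.strictMono hi).ne⟩

lemma not_modEq_of_lt {i j : Fin e} (hij : i < j) : ¬ n i ≡ n j [MOD e] := by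
  intro h
  obtain ⟨t, ht⟩ := (Nat.modEq_iff_dvd' (hH.strictMono hij).le).mp h
  have hj0 : (0 : Fin e) < j := (Fin.zero_le i).trans_lt hij
  refine hH.ne_of_mem_closure_image_Iio (k := j) (x := n i + t • n 0) ?_ ?_
  · exact add_mem (AddSubmonoid.subset_closure (Set.mem_image_of_mem n hij))
      (nsmul_mem (AddSubmonoid.subset_closure (Set.mem_image_of_mem n hj0)) t)
  · have := (hH.strictMono hij).le
    rw [smul_eq_mul, hH.apply_zero, mul_comm]
    omega

lemma eq_of_modEq {i j : Fin e} (h : n i ≡ n j [MOD e]) : i = j := by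
  rcases lt_trichotomy i j with hij | rfl | hij
  · exact absurd h (hH.not_modEq_of_lt hij)
  · rfl
  · exact absurd h.symm (hH.not_modEq_of_lt hij)

lemma exists_modEq (x : ℕ) : ∃ i, n i ≡ x [MOD e] := by
  let r : Fin e → Fin e := fun i => ⟨n i % e, Nat.mod_lt _ (NeZero.pos e)⟩
  have hr : Function.Surjective r :=
    Finite.surjective_of_injective fun i j hij => hH.eq_of_modEq (congrArg Fin.val hij)
  obtain ⟨i, hi⟩ := hr ⟨x % e, Nat.mod_lt _ (NeZero.pos e)⟩
  exact ⟨i, congrArg Fin.val hi⟩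

lemma exists_add_eq_add_mul_succ (i j : Fin e) : ∃ k t, n i + n j = n k + e * (t + 1) := by
  have he := NeZero.pos e
  have hi := hH.le_apply i
  have hj := hH.le_apply j
  obtain ⟨k, hk⟩ := hH.exists_modEq (n i + n j)
  rcases lt_or_ge (n k) (n i + n j) with hlt | hge
  · obtain ⟨_ | t, ht⟩ := (Nat.modEq_iff_dvd' hlt.le).mp hk
    · omega
    · exact ⟨k, t, by omega⟩
  · -- otherwise `n k = n i + n j + t e` would not be a minimal generator
    obtain ⟨t, ht⟩ := (Nat.modEq_iff_dvd' hge).mp hk.symm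
    have hik : i < k := hH.strictMono.lt_iff_lt.mp (by omega)
    have hjk : j < k := hH.strictMono.lt_iff_lt.mp (by omega)
    refine absurd ?_ (hH.ne_of_mem_closure_image_Iio (k := k) (x := n i + n j + t • n 0) ?_)
    · rw [smul_eq_mul, hH.apply_zero, mul_comm]
      omega
    · exact add_mem (add_mem (AddSubmonoid.subset_closure (Set.mem_image_of_mem n hik))
        (AddSubmonoid.subset_closure (Set.mem_image_of_mem n hjk)))
        (nsmul_mem (AddSubmonoid.subset_closure
          (Set.mem_image_of_mem n ((Fin.zero_le i).trans_lt hik))) t)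

lemma mem_iff_eq_zero_or_eq_add_mul {x : ℕ} : x ∈ H ↔ x = 0 ∨ ∃ i t, x = n i + e * t := by
  refine ⟨fun hx => ?_, ?_⟩
  · rw [← hH.closure_range_eq] at hx
    induction hx using AddSubmonoid.closure_induction with
    | mem x hx =>
      obtain ⟨i, rfl⟩ := hx
      exact .inr ⟨i, 0, by simp⟩
    | zero => exact .inl rfl
    | add x y _ _ hx hy =>
      rcases hx with rfl | ⟨i, s, rfl⟩
      · simpa using hy
      rcases hy with rfl | ⟨j, t, rfl⟩
      · exact .inr ⟨i, s, rfl⟩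
      obtain ⟨k, u, hk⟩ := hH.exists_add_eq_add_mul_succ i j
      exact .inr ⟨k, u + 1 + s + t, by rw [add_add_add_comm, hk]; ring⟩
  · rintro (rfl | ⟨i, t, rfl⟩)
    · exact zero_mem H
    · exact hH.add_mul_mem i t

lemma le_of_mem {x : ℕ} (hx : x ∈ H) (hx0 : x ≠ 0) : e ≤ x := by
  obtain hx0' | ⟨i, t, rfl⟩ := hH.mem_iff_eq_zero_or_eq_add_mul.mp hx
  · exact absurd hx0' hx0
  · exact (hH.le_apply i).trans (Nat.le_add_right _ _)

lemma eq_zero_or_eq_zero_of_add_eq {x y : ℕ} {k : Fin e} (hx : x ∈ H) (hy : y ∈ H)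
    (h : x + y = n k) : x = 0 ∨ y = 0 := by
  obtain hx0 | ⟨i, s, rfl⟩ := hH.mem_iff_eq_zero_or_eq_add_mul.mp hx
  · exact .inl hx0
  obtain hy0 | ⟨j, t, rfl⟩ := hH.mem_iff_eq_zero_or_eq_add_mul.mp hy
  · exact .inr hy0
  obtain ⟨l, u, hl⟩ := hH.exists_add_eq_add_mul_succ i j
  have hk : n k = n l + e * (u + 1 + s + t) := by rw [← h, add_add_add_comm, hl]; ring
  obtain rfl : l = k := hH.eq_of_modEq (by rw [hk]; exact (Nat.add_mul_mod_self_left _ _ _).symm)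
  exact absurd hk (Nat.lt_add_of_pos_right (Nat.mul_pos (NeZero.pos e) (by omega))).ne

lemma exists_apply_eq_of_notMem_of_add_mem {x : ℕ} (hx : x ∉ H) (hxe : x + e ∈ H) :
    ∃ i ≠ 0, x + e = n i := by
  obtain h0 | ⟨i, _ | t, hi⟩ := hH.mem_iff_eq_zero_or_eq_add_mul.mp hxe
  · exact absurd h0 (Nat.add_pos_right x (NeZero.pos e)).ne'
  · refine ⟨i, ?_, by simpa using hi⟩
    rintro rfl
    rw [hH.apply_zero] at hi
    exact hx (by rw [show x = 0 by omega]; exact zero_mem H)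
  · rw [Nat.mul_succ] at hi
    exact (hx (by rw [show x = n i + e * t by omega]; exact hH.add_mul_mem i t)).elim

lemma exists_add_mul_succ_eq_of_notMem {x : ℕ} (hx : x ∉ H) : ∃ k t, x + e * (t + 1) = n k := by
  obtain ⟨k, hk⟩ := hH.exists_modEq x
  rcases lt_or_ge x (n k) with hlt | hge
  · obtain ⟨_ | t, ht⟩ := (Nat.modEq_iff_dvd' hlt.le).mp hk.symm
    · omega
    · exact ⟨k, t, by omega⟩
  · obtain ⟨t, ht⟩ := (Nat.modEq_iff_dvd' hge).mp hk
    exact (hx (by rw [show x = n k + e * t by omega]; exact hH.add_mul_mem k t)).elim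

lemma sub_notMem {i : Fin e} (hi : i ≠ 0) : n i - e ∉ H := by
  intro hmem
  have hlt := hH.lt_apply hi
  rcases hH.eq_zero_or_eq_zero_of_add_eq (k := i) hmem hH.e_mem (by omega) with h | h
  · omega
  · exact NeZero.ne e h

lemma mem_PF_iff {f : ℕ} : f ∈ PF H ↔ ∃ i ≠ 0, f + e = n i := by
  refine ⟨fun ⟨hf, hfH⟩ => hH.exists_apply_eq_of_notMem_of_add_mem hf
    (hfH e hH.e_mem (NeZero.ne e)), fun ⟨i, hi0, hi⟩ => ⟨?_, fun h hh h0 => ?_⟩⟩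
  · rw [show f = n i - e by omega]
    exact hH.sub_notMem hi0
  · obtain h0' | ⟨j, t, rfl⟩ := hH.mem_iff_eq_zero_or_eq_add_mul.mp hh
    · exact absurd h0' h0
    obtain ⟨k, u, hk⟩ := hH.exists_add_eq_add_mul_succ i j
    rw [show f + (n j + e * t) = n k + e * (u + t) by linarith]
    exact hH.add_mul_mem k (u + t)

lemma sub_mem_or_mem_PF {x : ℕ} (hx : x ∈ H) (hx0 : x ≠ 0) : x - e ∈ H ∨ x - e ∈ PF H := by
  refine or_iff_not_imp_left.mpr fun hsub => hH.mem_PF_iff.mpr ?_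
  exact hH.exists_apply_eq_of_notMem_of_add_mem hsub
    (by rwa [Nat.sub_add_cancel (hH.le_of_mem hx hx0)])

lemma add_rev_eq_of_forall_ne (h : ∀ i ≠ 0, i ≠ ⊤ → ∃ j, n i + n j = e + n ⊤) (i : Fin e) :
    n i + n i.rev = e + n ⊤ := by
  refine Fin.add_rev_eq_of_forall_exists_add_eq hH.strictMono (fun i => ?_) i
  rcases eq_or_ne i 0 with rfl | hi0
  · exact ⟨⊤, by rw [hH.apply_zero]⟩
  rcases eq_or_ne i ⊤ with rfl | hitop
  · exact ⟨0, by rw [hH.apply_zero, add_comm]⟩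
  exact h i hi0 hitop

variable {F : ℕ} (hF : IsFrobeniusNumber H F)
include hF

lemma frobenius_add_eq : F + e = n ⊤ := by
  obtain ⟨i, hi0, hi⟩ := hH.mem_PF_iff.mp hF.mem_PF
  have hle := hF.2 (hH.sub_notMem (ne_bot_of_le_ne_bot hi0 le_top))
  have := hH.strictMono.monotone (le_top : i ≤ ⊤)
  have := hH.le_apply ⊤
  omega

lemma sub_mem_Omega {i : Fin e} (hi : i ≠ 0) : (n ⊤ : ℤ) - n i ∈ Omega H F := by
  have h1 := hH.frobenius_add_eq hF
  have h2 := hH.lt_apply hi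
  show (F : ℤ) - _ ∉ HZ H
  rw [show (F : ℤ) - ((n ⊤ : ℤ) - n i) = ((n i - e : ℕ) : ℤ) by omega, natCast_mem_HZ]
  exact hH.sub_notMem hi

lemma isNearlyGorenstein_iff_mem_OmegaInv : IsNearlyGorenstein H F ↔ (e : ℤ) ∈ OmegaInv H F := by
  constructor
  · intro hNG
    obtain ⟨w, hw, _, hz, hwz⟩ :=
      Set.mem_add.mp (hNG e (natCast_mem_HZ.mpr hH.e_mem) (by simp [NeZero.ne e]))
    obtain ⟨z, hzH, rfl⟩ := hF.mem_HZ_of_mem_OmegaInv hz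
    have hw0 := hF.nonneg_of_mem_Omega hw
    -- `z ≤ e` lies in `H`, so it is `0` or `e`
    have hez : e - z ∈ H := by
      rcases eq_or_ne z 0 with rfl | hz0
      · simpa using hH.e_mem
      · have := hH.le_of_mem hzH hz0
        rw [show e - z = 0 by omega]
        exact zero_mem H
    have := add_natCast_mem_OmegaInv hz hez
    rwa [show (z : ℤ) + ((e - z : ℕ) : ℤ) = e by omega] at this
  · rintro he _ ⟨x, hxH, rfl⟩ hx0
    refine Set.mem_add.mpr ⟨0, hF.zero_mem_Omega, x, ?_, zero_add _⟩
    have hx0' : x ≠ 0 := by exact_mod_cast hx0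
    have hex := hH.le_of_mem hxH hx0'
    rcases hH.sub_mem_or_mem_PF hxH hx0' with hsub | hPF
    · simpa [Nat.cast_sub hex] using add_natCast_mem_OmegaInv he hsub
    · intro w hw
      obtain ⟨a, ha, hae⟩ := he w hw
      have ha0 : a ≠ 0 := by
        have := hF.nonneg_of_mem_Omega hw
        have := NeZero.pos e
        omega
      exact ⟨x - e + a, hPF.2 a ha ha0, by push_cast [Nat.cast_sub hex]; omega⟩

lemma add_rev_eq_of_mem_OmegaInv (he : (e : ℤ) ∈ OmegaInv H F) (i : Fin e) :
    n i + n i.rev = e + n ⊤ := by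
  refine hH.add_rev_eq_of_forall_ne (fun i hi0 hitop => ?_) i
  obtain ⟨a, ha, hae⟩ := he _ (hH.sub_mem_Omega hF hi0)
  have hlt : n i < n ⊤ := hH.strictMono (lt_top_iff_ne_top.mpr hitop)
  have hie := hH.lt_apply hi0
  -- `a = e + (n ⊤ - n i) ∈ H` while `a - e ∉ H`, so `a` is a generator
  have hnotMem : a - e ∉ H := fun hmem => by
    rcases hH.eq_zero_or_eq_zero_of_add_eq (k := ⊤) (hH.mem i) hmem (by omega) with h | h <;> omega
  obtain ⟨j, -, hj⟩ := hH.exists_apply_eq_of_notMem_of_add_mem hnotMem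
    (by rwa [Nat.sub_add_cancel (by omega)])
  exact ⟨j, by omega⟩

lemma mem_OmegaInv_of_add_rev_eq (hrev : ∀ i, n i + n i.rev = e + n ⊤) :
    (e : ℤ) ∈ OmegaInv H F := by
  intro w hw
  have hFe := hH.frobenius_add_eq hF
  rcases lt_or_ge (F : ℤ) w with hFw | hwF
  · exact ⟨(e + w).toNat, hF.mem_of_lt (by omega), by omega⟩
  · obtain ⟨g, hg⟩ : ∃ g : ℕ, (g : ℤ) = F - w := ⟨(F - w).toNat, by omega⟩
    obtain ⟨k, t, hk⟩ := hH.exists_add_mul_succ_eq_of_notMem (x := g) fun hmem => hw ⟨g, hmem, hg⟩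
    -- `e + w = e + F - g = n (rev k) + t e`
    refine ⟨n k.rev + e * t, hH.add_mul_mem k.rev t, ?_⟩
    have := hrev k
    zify at hk hFe this
    push_cast
    linear_combination this + hk - hFe - hg

lemma isAlmostSymmetric_iff : IsAlmostSymmetric H F ↔ ∀ i, n i + n i.rev = e + n ⊤ := by
  have hFe := hH.frobenius_add_eq hF
  constructor
  · intro hAS i
    refine hH.add_rev_eq_of_forall_ne (fun i hi0 hitop => ?_) i
    have hlt : n i < n ⊤ := hH.strictMono (lt_top_iff_ne_top.mpr hitop)
    have hie := hH.lt_apply hi0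
    obtain ⟨j, -, hj⟩ := hH.mem_PF_iff.mp
      (hAS (n i - e) (hH.mem_PF_iff.mpr ⟨i, hi0, by omega⟩) (by omega))
    exact ⟨j, by omega⟩
  · intro hrev f hf hfF
    obtain ⟨i, hi0, hi⟩ := hH.mem_PF_iff.mp hf
    have hitop : i ≠ ⊤ := by rintro rfl; omega
    have := hrev i
    have := hH.strictMono.monotone (le_top : i ≤ ⊤)
    exact hH.mem_PF_iff.mpr ⟨i.rev, fun h => hitop (Fin.rev_eq_iff.mp h), by omega⟩

lemma isNearlyGorenstein_iff : IsNearlyGorenstein H F ↔ ∀ i, n i + n i.rev = e + n ⊤ :=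
  (hH.isNearlyGorenstein_iff_mem_OmegaInv hF).trans
    ⟨hH.add_rev_eq_of_mem_OmegaInv hF, hH.mem_OmegaInv_of_add_rev_eq hF⟩

end IsMinMultGenerators

/-- Let `H = ⟨n₁,…,n_e⟩` be a numerical semigroup of minimal multiplicity
(`n₁ = e`) with Frobenius number `F`. Then `H` is nearly Gorenstein iff `H` is
almost symmetric (Nari's criterion on `PF(H)`), and more precisely iff
`n₁ + n_e = n_i + n_{e−i+1}` for `i = 2,…,e`. -/
theorem minimal_multiplicity_ng_iff_as (e : ℕ) (he : 1 < e) (n : Fin e → ℕ)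
    (hmono : StrictMono n) (H : AddSubmonoid ℕ)
    (hgen : H = AddSubmonoid.closure (Set.range n))
    (hmin : ∀ i, n i ∉ AddSubmonoid.closure (Set.range n \ {n i}))
    (hmm : n ⟨0, by omega⟩ = e)
    (F : ℕ) (hF : IsGreatest {x : ℕ | x ∉ H} F) :
    ((∀ x ∈ HZ H, x ≠ 0 → x ∈ Omega H F + OmegaInv H F) ↔
        (∀ f ∈ PF H, f ≠ F → F - f ∈ PF H)) ∧
    ((∀ x ∈ HZ H, x ≠ 0 → x ∈ Omega H F + OmegaInv H F) ↔
        (∀ i : ℕ, (h2 : 2 ≤ i) → (hi : i ≤ e) →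
          n ⟨0, by omega⟩ + n ⟨e - 1, by omega⟩ =
            n ⟨i - 1, by omega⟩ + n ⟨e - i, by omega⟩)) := by
  have : NeZero e := ⟨by omega⟩
  have hH : IsMinMultGenerators H n := ⟨hmono, hgen.symm, hmin, hmm⟩
  have hNG := hH.isNearlyGorenstein_iff hF
  refine ⟨hNG.trans (hH.isAlmostSymmetric_iff hF).symm,
    hNG.trans ⟨fun h i h2 hi => ?_, fun h i => ?_⟩⟩
  · have hrev : Fin.rev (⟨i - 1, by omega⟩ : Fin e) = ⟨e - i, by omega⟩ :=
      Fin.ext (by simp only [Fin.val_rev]; omega)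
    have := h ⟨i - 1, by omega⟩
    rw [hrev] at this
    rw [hmm]
    exact this.symm
  · rcases eq_or_ne i 0 with rfl | hi0
    · rw [Fin.rev_zero_eq_top, hH.apply_zero]
    have := h (i + 1) (by have := Fin.pos_iff_ne_zero.mpr hi0; omega) (by omega)
    rw [hmm] at this
    exact this.symm
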